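/- arXiv:1804.10948 — 2 statements merged into one kernel-verified Lean document; each statement's English description precedes it below -/
import Mathlib

section
/- Let h ≥ 1, α > 0 and κ_h ∈ ℝ, let β_h = α/(1+κ_h), and let A > 0. Define h(u,v) = β_h·log₊(u·|v|) − 1_{u|v|>1} − α·log₊(u) + 1_{u>1} for u > 0, v ∈ ℝ. Then for W ∈ ℝ with A = |W|^{β_h}, the change of variables t = s^{−α} gives ∫_{1 ∧ |W|^{−1/(1+κ_h)}}^{∞} h(s, s^{κ_h}|W|)² α s^{−α−1} ds = |A − 1|. -/
/-! With `c = |W| ^ (-1/(1+κ))` one has `β log (s ^ (1+κ) |W|) = α log (s / c)`, so the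
integrand is `(g (s / c) - g s)²` for the single function `g x = α log₊ x - 1_{x > 1}`.
For `0 < a ≤ b`, `g (s / a) - g (s / b)` equals `α log (s / a) - 1` on `(a, b]` and the constant
`α log (b / a)` on `(b, ∞)`. Against the Pareto density `α s ^ (-α-1)` the first piece has the
explicit primitive `-s ^ (-α) ((α log (s / a))² + 1)` and the second is a constant times the tail
`b ^ (-α)`; the `log (b / a)` terms cancel and the integral is `a ^ (-α) - b ^ (-α)`. -/

open MeasureTheory Real Set

noncomputable def logPlus (x : ℝ) : ℝ := max (Real.log x) 0

lemma logPlus_of_le_one {x : ℝ} (hx0 : 0 ≤ x) (hx : x ≤ 1) : logPlus x = 0 :=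
  max_eq_right (Real.log_nonpos hx0 hx)

lemma logPlus_of_one_le {x : ℝ} (hx : 1 ≤ x) : logPlus x = Real.log x :=
  max_eq_left (Real.log_nonneg hx)

lemma logPlus_rpow {x : ℝ} (hx : 0 < x) {p : ℝ} (hp : 0 < p) :
    logPlus (x ^ p) = p * logPlus x := by
  rw [logPlus, logPlus, Real.log_rpow hx, mul_max_of_nonneg _ _ hp.le, mul_zero]

noncomputable def logScore (α x : ℝ) : ℝ := α * logPlus x - if 1 < x then 1 else 0

lemma logScore_of_le_one (α : ℝ) {x : ℝ} (hx0 : 0 ≤ x) (hx : x ≤ 1) :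
    logScore α x = 0 := by
  rw [logScore, logPlus_of_le_one hx0 hx, if_neg hx.not_gt]
  ring

lemma logScore_of_one_lt (α : ℝ) {x : ℝ} (hx : 1 < x) :
    logScore α x = α * Real.log x - 1 := by
  rw [logScore, logPlus_of_one_le hx.le, if_pos hx]

lemma logScore_rpow (β : ℝ) {x p : ℝ} (hx : 0 < x) (hp : 0 < p) :
    β * logPlus (x ^ p) - (if 1 < x ^ p then (1 : ℝ) else 0) = logScore (β * p) x := by
  have hiff : 1 < x ^ p ↔ 1 < x := by
    rw [Real.one_lt_rpow_iff_of_pos hx]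
    constructor
    · rintro (⟨h, -⟩ | ⟨-, hneg⟩)
      exacts [h, absurd hneg hp.not_gt]
    · exact fun h => Or.inl ⟨h, hp⟩
  rw [logScore, logPlus_rpow hx hp, if_congr hiff rfl rfl, mul_assoc]

section ParetoIntegrals

variable {α : ℝ}

lemma hasDerivAt_neg_rpow_mul_log_div_sq_add_one {a s : ℝ} (ha : 0 < a) (hs : 0 < s) :
    HasDerivAt (fun s => -(s ^ (-α) * ((α * Real.log (s / a)) ^ 2 + 1)))
      ((α * Real.log (s / a) - 1) ^ 2 * (α * s ^ (-α - 1))) s := by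
  have hpow : HasDerivAt (fun s : ℝ => s ^ (-α)) (-α * s ^ (-α - 1)) s :=
    Real.hasDerivAt_rpow_const (Or.inl hs.ne')
  have hlog : HasDerivAt (fun s => Real.log (s / a)) (1 / a / (s / a)) s :=
    ((hasDerivAt_id s).div_const a).log (div_pos hs ha).ne'
  have hrpow_succ : s ^ (-α) = s ^ (-α - 1) * s := by
    rw [← Real.rpow_add_one hs.ne']
    ring_nf
  refine (hpow.mul (((hlog.const_mul α).fun_pow 2).add_const 1)).neg.congr_deriv ?_
  rw [hrpow_succ]
  field_simp
  ring

lemma continuousOn_log_div_sub_one_sq_mul_pareto {a : ℝ} (ha : 0 < a) :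
    ContinuousOn (fun s => (α * Real.log (s / a) - 1) ^ 2 * (α * s ^ (-α - 1))) (Ioi 0) :=
  fun s (hs : 0 < s) =>
    (ContinuousAt.mul (by fun_prop (disch := positivity))
      (by fun_prop (disch := exact Or.inl hs.ne'))).continuousWithinAt

lemma integral_log_div_sub_one_sq_mul_pareto {a b : ℝ} (ha : 0 < a) (hab : a ≤ b) :
    ∫ s in a..b, (α * Real.log (s / a) - 1) ^ 2 * (α * s ^ (-α - 1)) =
      a ^ (-α) - b ^ (-α) * ((α * Real.log (b / a)) ^ 2 + 1) := by
  have hpos : uIcc a b ⊆ Ioi 0 := fun s hs =>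
    ha.trans_le (by rw [uIcc_of_le hab] at hs; exact hs.1)
  have hcont := (continuousOn_log_div_sub_one_sq_mul_pareto (α := α) ha).mono hpos
  rw [intervalIntegral.integral_eq_sub_of_hasDerivAt
    (fun s hs => hasDerivAt_neg_rpow_mul_log_div_sq_add_one ha (hpos hs))
    hcont.intervalIntegrable, div_self ha.ne', Real.log_one]
  ring

lemma integrableOn_const_mul_pareto (hα : 0 < α) (K : ℝ) {b : ℝ} (hb : 0 < b) :
    IntegrableOn (fun s => K * (α * s ^ (-α - 1))) (Ioi b) :=
  IntegrableOn.congr_fun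
    (Integrable.const_mul (integrableOn_Ioi_rpow_of_lt (a := -α - 1) (by linarith) hb) (K * α))
    (fun s _ => by ring) measurableSet_Ioi

lemma integral_Ioi_const_mul_pareto (hα : 0 < α) (K : ℝ) {b : ℝ} (hb : 0 < b) :
    ∫ s in Ioi b, K * (α * s ^ (-α - 1)) = K * b ^ (-α) := by
  simp_rw [← mul_assoc]
  rw [integral_const_mul, integral_Ioi_rpow_of_lt (by linarith) hb, sub_add_cancel]
  field_simp

lemma integral_Ioi_logScore_sub_sq_of_le (hα : 0 < α) {a b : ℝ} (ha : 0 < a) (hab : a ≤ b) :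
    ∫ s in Ioi a, (logScore α (s / a) - logScore α (s / b)) ^ 2 * (α * s ^ (-α - 1)) =
      a ^ (-α) - b ^ (-α) := by
  have hb : 0 < b := ha.trans_le hab
  have hmiddle :
      EqOn (fun s => (logScore α (s / a) - logScore α (s / b)) ^ 2 * (α * s ^ (-α - 1)))
      (fun s => (α * Real.log (s / a) - 1) ^ 2 * (α * s ^ (-α - 1))) (Ioc a b) := by
    rintro s ⟨has, hsb⟩
    dsimp only
    rw [logScore_of_one_lt α ((one_lt_div ha).mpr has),
      logScore_of_le_one α (div_pos (ha.trans has) hb).le ((div_le_one hb).mpr hsb), sub_zero]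
  have htail :
      EqOn (fun s => (logScore α (s / a) - logScore α (s / b)) ^ 2 * (α * s ^ (-α - 1)))
      (fun s => (α * Real.log (b / a)) ^ 2 * (α * s ^ (-α - 1))) (Ioi b) := by
    intro s hbs
    have hs : 0 < s := hb.trans hbs
    dsimp only
    rw [logScore_of_one_lt α ((one_lt_div ha).mpr (hab.trans_lt hbs)),
      logScore_of_one_lt α ((one_lt_div hb).mpr hbs), Real.log_div hs.ne' ha.ne',
      Real.log_div hs.ne' hb.ne', Real.log_div hb.ne' ha.ne']
    ring
  have hint_middle : IntegrableOn
      (fun s => (α * Real.log (s / a) - 1) ^ 2 * (α * s ^ (-α - 1))) (Ioc a b) :=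
    ((continuousOn_log_div_sub_one_sq_mul_pareto ha).mono fun _ hs =>
      ha.trans_le hs.1).integrableOn_Icc.mono_set Ioc_subset_Icc_self
  rw [← Ioc_union_Ioi_eq_Ioi hab,
    setIntegral_union (Ioc_disjoint_Ioi le_rfl) measurableSet_Ioi
      (hint_middle.congr_fun hmiddle.symm measurableSet_Ioc)
      ((integrableOn_const_mul_pareto hα _ hb).congr_fun htail.symm measurableSet_Ioi),
    setIntegral_congr_fun measurableSet_Ioc hmiddle,
    setIntegral_congr_fun measurableSet_Ioi htail,
    ← intervalIntegral.integral_of_le hab, integral_log_div_sub_one_sq_mul_pareto ha hab,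
    integral_Ioi_const_mul_pareto hα _ hb]
  ring

lemma integral_Ioi_min_logScore_sub_sq (hα : 0 < α) {a b : ℝ} (ha : 0 < a) (hb : 0 < b) :
    ∫ s in Ioi (min a b), (logScore α (s / a) - logScore α (s / b)) ^ 2 * (α * s ^ (-α - 1)) =
      |a ^ (-α) - b ^ (-α)| := by
  rcases le_total a b with hab | hba
  · rw [min_eq_left hab, integral_Ioi_logScore_sub_sq_of_le hα ha hab, abs_of_nonneg
      (sub_nonneg.mpr (Real.rpow_le_rpow_of_nonpos ha hab (neg_nonpos.mpr hα.le)))]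
  · rw [min_eq_right hba, abs_sub_comm, abs_of_nonneg
      (sub_nonneg.mpr (Real.rpow_le_rpow_of_nonpos hb hba (neg_nonpos.mpr hα.le))),
      ← integral_Ioi_logScore_sub_sq_of_le hα hb hba]
    congr 1 with s
    ring

end ParetoIntegrals

theorem stmt0_general (α κ : ℝ) (hα : 0 < α) (hκ : 0 < 1 + κ)
    (β : ℝ) (hβ : β = α / (1 + κ)) (W : ℝ) (A : ℝ) (hA : A = |W| ^ β) (hA0 : 0 < A)
    (hfun : ℝ → ℝ → ℝ)
    (hdef : ∀ u v : ℝ, hfun u v =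
      β * logPlus (u * |v|) - (if 1 < u * |v| then (1:ℝ) else 0)
        - α * logPlus u + (if 1 < u then (1:ℝ) else 0)) :
    ∫ s in Set.Ioi (min 1 (|W| ^ (-(1 / (1 + κ))))),
      (hfun s (s ^ κ * |W|)) ^ 2 * (α * s ^ (-α - 1)) = |A - 1| := by
  have hW : 0 < |W| := abs_pos.mpr fun hW0 => by
    rw [hW0, abs_zero, Real.zero_rpow (by rw [hβ]; positivity)] at hA
    exact hA0.ne' hA
  set c := |W| ^ (-(1 / (1 + κ))) with hc
  have hc0 : 0 < c := Real.rpow_pos_of_pos hW _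
  have hcA : c ^ (-α) = A := by
    rw [hc, ← Real.rpow_mul hW.le, hA, hβ]
    congr 1
    field_simp
  have hscale : ∀ s : ℝ, 0 < s → s * |(s ^ κ * |W|)| = (s / c) ^ (1 + κ) := fun s hs => by
    rw [Real.div_rpow hs.le hc0.le, hc, ← Real.rpow_mul hW.le,
      show -(1 / (1 + κ)) * (1 + κ) = -1 by field_simp, Real.rpow_neg_one, div_inv_eq_mul,
      abs_mul, abs_of_pos (Real.rpow_pos_of_pos hs κ), abs_abs, Real.rpow_add hs, Real.rpow_one]
    ring
  have hintegrand : ∀ s ∈ Ioi (min 1 c),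
      hfun s (s ^ κ * |W|) = logScore α (s / c) - logScore α (s / 1) := fun s hs => by
    have hs0 : 0 < s := (lt_min one_pos hc0).trans hs
    rw [hdef, hscale s hs0, logScore_rpow β (div_pos hs0 hc0) hκ, hβ,
      div_mul_cancel₀ α hκ.ne', div_one]
    unfold logScore
    ring
  rw [setIntegral_congr_fun measurableSet_Ioi fun s hs => by
      rw [hintegrand s hs, ← neg_sub, neg_sq],
    integral_Ioi_min_logScore_sub_sq hα one_pos hc0, Real.one_rpow, hcA, abs_sub_comm]

/-- variance computation for the scaling exponent estimator. -/
theorem stmt0 (hlag : ℕ) (hhlag : 1 ≤ hlag) (α κ : ℝ) (hα : 0 < α) (hκ : 0 < 1 + κ)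
    (β : ℝ) (hβ : β = α / (1 + κ)) (W : ℝ) (A : ℝ) (hA : A = |W| ^ β) (hA0 : 0 < A)
    (hfun : ℝ → ℝ → ℝ)
    (hdef : ∀ u v : ℝ, hfun u v =
      β * logPlus (u * |v|) - (if 1 < u * |v| then (1:ℝ) else 0)
        - α * logPlus u + (if 1 < u then (1:ℝ) else 0)) :
    ∫ s in Set.Ioi (min 1 (|W| ^ (-(1 / (1 + κ))))),
      (hfun s (s ^ κ * |W|)) ^ 2 * (α * s ^ (-α - 1)) = |A - 1| :=
  stmt0_general α κ hα hκ β hβ W A hA hA0 hfun hdef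
end

section
/- Let F̄ be regularly varying at infinity with index −α < 0 and let b be regularly varying with index κ ≥ 0. Suppose for all y > 0, lim_{x→∞} P(|X_0 X_h| > x b(x) y)/F̄(x) = c·y^{−α/(1+κ)} for a constant c > 0 (as in eq:tail-scaling-exponent). Then the function x ↦ P(|X_0X_h| > x) is regularly varying at infinity with index −α/(1+κ). -/
/-!
The map `h x = x * b x` is regularly varying of index `1 + κ > 0`. Hence for any `M > 1`, along a
geometric sequence `l ^ n` with `l > 1` close enough to `1`, the values `A n = h (l ^ n)` tend to
infinity with `A (n + 1) ≤ M * A n`, so every large `u` lies in some `[A n, M * A n]`. As `G` is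
antitone, `G (t * u) / G u` then lies between `G (t * M * A n) / G (A n)` and
`G (t * A n) / G (M * A n)`, which by the hypothesis tend to `(t * M) ^ ρ` and `(t / M) ^ ρ`
(`ρ = -α / (1 + κ)`); both are as close to `t ^ ρ` as we like.
-/

open MeasureTheory Filter

def RegVarying (g : ℝ → ℝ) (ρ : ℝ) : Prop :=
  ∀ t : ℝ, 0 < t → Tendsto (fun x => g (t * x) / g x) atTop (nhds (t ^ ρ))

open Topology

lemma exists_one_lt_mem_of_continuousAt {f : ℝ → ℝ} {s : Set ℝ} (hf : ContinuousAt f 1)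
    (hs : s ∈ 𝓝 (f 1)) : ∃ M > 1, f M ∈ s :=
  (((hf.eventually_mem hs).filter_mono nhdsWithin_le_nhds).and
    (self_mem_nhdsWithin : Set.Ioi (1 : ℝ) ∈ 𝓝[>] 1)).exists.imp fun _ h => ⟨h.2, h.1⟩

lemma tendsto_atTop_of_tendsto_succ_div {A : ℕ → ℝ} {q : ℝ} (hq : 1 < q)
    (hpos : ∀ᶠ n in atTop, 0 < A n)
    (hratio : Tendsto (fun n => A (n + 1) / A n) atTop (𝓝 q)) :
    Tendsto A atTop atTop := by
  obtain ⟨r, hr, hrq⟩ := exists_between hq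
  obtain ⟨N, hN⟩ := eventually_atTop.1 (hpos.and (hratio.eventually (lt_mem_nhds hrq)))
  refine (tendsto_add_atTop_iff_nat N).1 (tendsto_atTop_of_geom_le ?_ hr fun k => ?_)
  · simpa using (hN N le_rfl).1
  obtain ⟨hA, hAr⟩ := hN (k + N) (Nat.le_add_left N k)
  rw [Nat.add_right_comm]
  exact (lt_div_iff₀ hA).1 hAr |>.le

lemma Filter.Tendsto.eventually_exists_le_lt_succ {A : ℕ → ℝ} (hA : Tendsto A atTop atTop)
    {P : ℕ → Prop} (hP : ∀ᶠ n in atTop, P n) :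
    ∀ᶠ u in atTop, ∃ n, P n ∧ A n ≤ u ∧ u < A (n + 1) := by
  obtain ⟨N, hN⟩ := eventually_atTop.1 hP
  filter_upwards [eventually_ge_atTop (A N)] with u hu
  have hex : ∃ k, u < A (N + k) := ((tendsto_add_atTop_iff_nat N).2 hA).eventually_gt_atTop u
    |>.exists.imp fun k hk => by rwa [add_comm]
  have hk : Nat.find hex ≠ 0 := fun h => (Nat.find_spec hex).not_ge (by simpa [h] using hu)
  refine ⟨N + (Nat.find hex - 1), hN _ (Nat.le_add_right _ _),
    not_lt.1 (Nat.find_min hex (Nat.sub_one_lt hk)), ?_⟩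
  rw [add_assoc, Nat.sub_add_cancel (Nat.one_le_iff_ne_zero.2 hk)]
  exact Nat.find_spec hex

namespace RegVarying

lemma mul {f g : ℝ → ℝ} {ρ σ : ℝ} (hf : RegVarying f ρ) (hg : RegVarying g σ) :
    RegVarying (fun x => f x * g x) (ρ + σ) := fun t ht => by
  simpa only [mul_div_mul_comm, Real.rpow_add ht] using (hf t ht).mul (hg t ht)

lemma id : RegVarying (fun x => x) 1 := fun t _ => by
  refine tendsto_const_nhds.congr' ?_
  filter_upwards [eventually_ne_atTop 0] with x hx
  rw [Real.rpow_one, mul_div_cancel_right₀ t hx]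

lemma tendsto_pow_succ_div {h : ℝ → ℝ} {σ l : ℝ} (hh : RegVarying h σ) (hl : 1 < l) :
    Tendsto (fun n : ℕ => h (l ^ (n + 1)) / h (l ^ n)) atTop (𝓝 (l ^ σ)) := by
  simp_rw [pow_succ']
  exact (hh l (zero_lt_one.trans hl)).comp (tendsto_pow_atTop_atTop_of_one_lt hl)

lemma exists_geometric_sampling {h : ℝ → ℝ} {σ M : ℝ} (hh : RegVarying h σ) (hσ : 0 < σ)
    (hpos : ∀ᶠ x in atTop, 0 < h x) (hM : 1 < M) :
    ∃ l > 1, Tendsto (fun n : ℕ => h (l ^ n)) atTop atTop ∧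
      ∀ᶠ n : ℕ in atTop, h (l ^ (n + 1)) ≤ h (l ^ n) * M := by
  obtain ⟨l, hl, hlM⟩ : ∃ l > 1, l ^ σ < M :=
    exists_one_lt_mem_of_continuousAt (continuousAt_id.rpow_const (Or.inr hσ.le))
      (Iio_mem_nhds (by simpa using hM))
  have hratio := hh.tendsto_pow_succ_div hl
  have hpos' := (tendsto_pow_atTop_atTop_of_one_lt hl).eventually hpos
  refine ⟨l, hl, tendsto_atTop_of_tendsto_succ_div (Real.one_lt_rpow hl hσ) hpos' hratio, ?_⟩
  filter_upwards [hpos', hratio.eventually (gt_mem_nhds hlM)] with n hn hnM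
  exact ((div_lt_iff₀' hn).1 hnM).le

end RegVarying

lemma antitone_toReal_measure_lt {Ω : Type*} [MeasurableSpace Ω] (μ : Measure Ω)
    [IsFiniteMeasure μ] (f : Ω → ℝ) : Antitone fun x => (μ {ω | x < f ω}).toReal :=
  fun _ _ hxy => ENNReal.toReal_mono (measure_ne_top μ _)
    (measure_mono fun _ hω => lt_of_le_of_lt hxy hω)

section Sampling

variable {G : ℝ → ℝ} {A F : ℕ → ℝ} {c ρ : ℝ}

lemma tendsto_div_of_sampling (hc : 0 < c) (hF : ∀ᶠ n in atTop, 0 < F n)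
    (hlim : ∀ y > 0, Tendsto (fun n => G (A n * y) / F n) atTop (𝓝 (c * y ^ ρ)))
    {y z : ℝ} (hy : 0 < y) (hz : 0 < z) :
    Tendsto (fun n => G (A n * y) / G (A n * z)) atTop (𝓝 ((y / z) ^ ρ)) := by
  rw [Real.div_rpow hy.le hz.le, ← mul_div_mul_left _ _ hc.ne']
  refine ((hlim y hy).div (hlim z hz) (by positivity)).congr' ?_
  filter_upwards [hF] with n hn
  exact div_div_div_cancel_right₀ hn.ne' _ _

lemma Antitone.pos_of_sampling (hG : Antitone G) (hc : 0 < c) (hA : Tendsto A atTop atTop)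
    (hF : ∀ᶠ n in atTop, 0 < F n)
    (hlim : ∀ y > 0, Tendsto (fun n => G (A n * y) / F n) atTop (𝓝 (c * y ^ ρ))) (x : ℝ) :
    0 < G x := by
  have hpos : ∀ᶠ n in atTop, 0 < G (A n * 1) / F n :=
    (hlim 1 one_pos).eventually (lt_mem_nhds (by simpa using hc))
  obtain ⟨n, hxn, hFn, hn⟩ := ((hA.eventually_ge_atTop x).and (hF.and hpos)).exists
  rw [mul_one] at hn
  exact (div_pos_iff_of_pos_right hFn |>.1 hn).trans_le (hG hxn)

theorem RegVarying.of_antitone_of_sampling (hG : Antitone G) (hc : 0 < c)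
    (hsample : ∀ M > 1, ∃ A F : ℕ → ℝ, Tendsto A atTop atTop ∧
      (∀ᶠ n in atTop, A (n + 1) ≤ A n * M) ∧ (∀ᶠ n in atTop, 0 < F n) ∧
      ∀ y > 0, Tendsto (fun n => G (A n * y) / F n) atTop (𝓝 (c * y ^ ρ))) :
    RegVarying G ρ := by
  intro t ht
  refine tendsto_order.2 ⟨fun a ha => ?_, fun w hw => ?_⟩
  · obtain ⟨M, hM, haM⟩ : ∃ M > 1, a < (t * M) ^ ρ :=
      exists_one_lt_mem_of_continuousAt
        ((continuousAt_const.mul continuousAt_id).rpow_const (Or.inl (by simpa using ht.ne')))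
        (Ioi_mem_nhds (by simpa using ha))
    obtain ⟨A, F, hA, hstep, hF, hlim⟩ := hsample M hM
    have hratio := tendsto_div_of_sampling hc hF hlim (mul_pos ht (zero_lt_one.trans hM)) one_pos
    rw [div_one] at hratio
    have hGpos := hG.pos_of_sampling hc hA hF hlim
    filter_upwards [hA.eventually_exists_le_lt_succ
      (hstep.and (hratio.eventually (lt_mem_nhds haM)))] with u ⟨n, ⟨hnM, hn⟩, hnu, hun⟩
    calc a < G (A n * (t * M)) / G (A n * 1) := hn
      _ ≤ G (t * u) / G u := by
        refine div_le_div₀ (hGpos _).le (hG ?_) (hGpos _) (hG (by rwa [mul_one]))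
        nlinarith
  · obtain ⟨M, hM, hMw⟩ : ∃ M > 1, (t / M) ^ ρ < w :=
      exists_one_lt_mem_of_continuousAt
        ((continuousAt_const.div continuousAt_id one_ne_zero).rpow_const
          (Or.inl (by simpa using ht.ne')))
        (Iio_mem_nhds (by simpa using hw))
    obtain ⟨A, F, hA, hstep, hF, hlim⟩ := hsample M hM
    have hratio := tendsto_div_of_sampling hc hF hlim ht (zero_lt_one.trans hM)
    have hGpos := hG.pos_of_sampling hc hA hF hlim
    filter_upwards [hA.eventually_exists_le_lt_succ
      (hstep.and (hratio.eventually (gt_mem_nhds hMw)))] with u ⟨n, ⟨hnM, hn⟩, hnu, hun⟩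
    calc G (t * u) / G u ≤ G (A n * t) / G (A n * M) := by
          refine div_le_div₀ (hGpos _).le (hG ?_) (hGpos _) (hG (by linarith))
          nlinarith
      _ < w := hn

end Sampling

theorem stmt16_general {Ω : Type*} [MeasurableSpace Ω] (μ : Measure Ω) [IsProbabilityMeasure μ]
    (α κ c : ℝ) (hκ : 0 ≤ κ) (hc : 0 < c) (Fbar b : ℝ → ℝ) (hbrv : RegVarying b κ)
    (hFpos : ∀ᶠ x in atTop, 0 < Fbar x) (hbpos : ∀ᶠ x in atTop, 0 < b x) (X0 Xh : Ω → ℝ)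
    (G : ℝ → ℝ) (hG : ∀ x, G x = (μ {ω | x < |X0 ω * Xh ω|}).toReal)
    (hlim : ∀ y : ℝ, 0 < y →
      Tendsto (fun x => G (x * b x * y) / Fbar x) atTop (nhds (c * y ^ (-α / (1 + κ))))) :
    RegVarying G (-α / (1 + κ)) := by
  have hGanti : Antitone G := by
    rw [show G = _ from funext hG]
    exact antitone_toReal_measure_lt μ _
  have hxb : ∀ᶠ x in atTop, 0 < x * b x := by
    filter_upwards [eventually_gt_atTop 0, hbpos] with x hx hbx
    positivity
  refine RegVarying.of_antitone_of_sampling hGanti hc fun M hM => ?_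
  obtain ⟨l, hl, hA, hstep⟩ :=
    (RegVarying.id.mul hbrv).exists_geometric_sampling (by linarith) hxb hM
  have hpow := tendsto_pow_atTop_atTop_of_one_lt hl
  exact ⟨_, fun n => Fbar (l ^ n), hA, hstep, hpow.eventually hFpos,
    fun y hy => (hlim y hy).comp hpow⟩

/-- if `P(|X₀X_h| > x b(x) y)/F̄(x) → c y^{−α/(1+κ)}` with `F̄` regularly
varying of index `−α` and `b` regularly varying of index `κ ≥ 0`, then
`x ↦ P(|X₀X_h| > x)` is regularly varying of index `−α/(1+κ)`. -/
theorem stmt16 {Ω : Type*} [MeasurableSpace Ω] (μ : Measure Ω) [IsProbabilityMeasure μ]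
    (α κ c : ℝ) (hα : 0 < α) (hκ : 0 ≤ κ) (hc : 0 < c)
    (Fbar b : ℝ → ℝ) (hmF : Measurable Fbar) (hmb : Measurable b)
    (hFrv : RegVarying Fbar (-α)) (hbrv : RegVarying b κ)
    (hFpos : ∀ᶠ x in atTop, 0 < Fbar x) (hbpos : ∀ᶠ x in atTop, 0 < b x)
    (X0 Xh : Ω → ℝ) (hmX0 : Measurable X0) (hmXh : Measurable Xh)
    (G : ℝ → ℝ) (hG : ∀ x, G x = (μ {ω | x < |X0 ω * Xh ω|}).toReal)
    (hlim : ∀ y : ℝ, 0 < y →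
      Tendsto (fun x => G (x * b x * y) / Fbar x) atTop (nhds (c * y ^ (-α / (1 + κ))))) :
    RegVarying G (-α / (1 + κ)) :=
  stmt16_general μ α κ c hκ hc Fbar b hbrv hFpos hbpos X0 Xh G hG hlim
end
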